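/- Let S_I and S_F be connected shapes such that B(S_I) = B(S_F), m_C(S_I) = m_C(S_F), m_R(S_I) = m_R(S_F), M_C(S_I, i) ≤ M_C(S_F, i) for all 0 ≤ i < m_C(S_I), and M_R(S_I, i) ≤ M_R(S_F, i) for all 0 ≤ i < m_R(S_I). Then there exists a sequence of at most 2·⌈log₂ |S_F|⌉ east and north RC doubling operations transforming S_I into a translate of S_F. -/

import Mathlib

/-!
A connected shape is, up to translation, its baseline with the `i`-th distinct column repeated
`M_C(S,i)` times and the `j`-th distinct row repeated `M_R(S,j)` times. In this normal form, an
east RC doubling whose doubled set consists of the first `δ i ≤ a i` columns of every block `i`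
turns the column multiplicities `a` into `a + δ`. Replacing `a i` by `min (2 a i) (A i)` at each
step reaches multiplicities `A` with `a ≤ A ≤ 2 ^ k a` in at most `k` steps. As `1 ≤ M_C(S_I,i)`
and `M_C(S_F,i) ≤ |S_F| ≤ 2 ^ ⌈log₂ |S_F|⌉`, `⌈log₂ |S_F|⌉` east doublings fix the columns, and,
by transposition, as many north doublings fix the rows.
-/

/-- Minimum first coordinate of a shape (0 for the empty set). -/
def xmin (S : Finset (ℤ × ℤ)) : ℤ := WithTop.untopD 0 ((S.image Prod.fst).min)

/-- Minimum second coordinate of a shape (0 for the empty set). -/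
def ymin (S : Finset (ℤ × ℤ)) : ℤ := WithTop.untopD 0 ((S.image Prod.snd).min)

/-- East full doubling. -/
def DE (S : Finset (ℤ × ℤ)) : Finset (ℤ × ℤ) :=
  S.image (fun p => (2 * p.1 - xmin S, p.2)) ∪
    S.image (fun p => (2 * p.1 - xmin S + 1, p.2))

/-- North full doubling. -/
def DN (S : Finset (ℤ × ℤ)) : Finset (ℤ × ℤ) :=
  S.image (fun p => (p.1, 2 * p.2 - ymin S)) ∪
    S.image (fun p => (p.1, 2 * p.2 - ymin S + 1))

/-- Apply a sequence of full doubling operations (`true` = east, `false` = north),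
in order (head of the list first). -/
def applySeq (σ : List Bool) (S : Finset (ℤ × ℤ)) : Finset (ℤ × ℤ) :=
  σ.foldl (fun T b => if b then DE T else DN T) S

/-- The (p,q)-rectangle around an integer point. -/
noncomputable def Rec2 (u : ℤ × ℤ) (p q : ℕ) : Finset (ℤ × ℤ) :=
  Finset.Icc u.1 (u.1 + (p : ℤ) - 1) ×ˢ Finset.Icc u.2 (u.2 + (q : ℤ) - 1)

/-- The reconfiguration function `F_{l,k}`. -/
noncomputable def F (l k : ℕ) (S : Finset (ℤ × ℤ)) : Finset (ℤ × ℤ) :=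
  S.biUnion fun p =>
    Rec2 (p.1 + ((2 : ℤ) ^ l - 1) * (p.1 - xmin S),
          p.2 + ((2 : ℤ) ^ k - 1) * (p.2 - ymin S)) (2 ^ l) (2 ^ k)

/-- Two grid points are adjacent if they are at orthogonal distance 1. -/
def Adj (u v : ℤ × ℤ) : Prop := (u.1 - v.1).natAbs + (u.2 - v.2).natAbs = 1

/-- A shape is connected if any two of its points are joined by a path of
adjacent points inside the shape. -/
def ShapeConnected (S : Finset (ℤ × ℤ)) : Prop :=
  ∀ u ∈ S, ∀ v ∈ S,
    Relation.ReflTransGen (fun a b => a ∈ S ∧ b ∈ S ∧ Adj a b) u v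

/-- `wD D x` is the number of elements of `D` strictly west of `x`. -/
def wD (D : Finset ℤ) (x : ℤ) : ℕ := (D.filter (· < x)).card

/-- East RC doubling of `S` with doubled column set `D`. -/
def RCE (S : Finset (ℤ × ℤ)) (D : Finset ℤ) : Finset (ℤ × ℤ) :=
  S.image (fun p => (p.1 + (wD D p.1 : ℤ), p.2)) ∪
    (S.filter fun p => p.1 ∈ D).image fun p => (p.1 + (wD D p.1 : ℤ) + 1, p.2)

/-- North RC doubling of `S` with doubled row set `D`. -/
def RCN (S : Finset (ℤ × ℤ)) (D : Finset ℤ) : Finset (ℤ × ℤ) :=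
  S.image (fun p => (p.1, p.2 + (wD D p.2 : ℤ))) ∪
    (S.filter fun p => p.2 ∈ D).image fun p => (p.1, p.2 + (wD D p.2 : ℤ) + 1)

/-- `D` is an admissible doubled column set for `S`. -/
def eastAdmissible (S : Finset (ℤ × ℤ)) (D : Finset ℤ) : Prop :=
  D.Nonempty ∧ ∀ d ∈ D, ∃ y, (d, y) ∈ S

/-- `D` is an admissible doubled row set for `S`. -/
def northAdmissible (S : Finset (ℤ × ℤ)) (D : Finset ℤ) : Prop :=
  D.Nonempty ∧ ∀ d ∈ D, ∃ x, (x, d) ∈ S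

/-- One east or north RC doubling step. -/
def RCStep (S T : Finset (ℤ × ℤ)) : Prop :=
  ∃ D : Finset ℤ,
    (eastAdmissible S D ∧ T = RCE S D) ∨ (northAdmissible S D ∧ T = RCN S D)

/-- One single column or single row doubling step (an RC step with `|D| = 1`). -/
def SingleStep (S T : Finset (ℤ × ℤ)) : Prop :=
  ∃ D : Finset ℤ, D.card = 1 ∧
    ((eastAdmissible S D ∧ T = RCE S D) ∨ (northAdmissible S D ∧ T = RCN S D))

/-- Translate a shape by a vector. -/
def translateSh (v : ℤ × ℤ) (S : Finset (ℤ × ℤ)) : Finset (ℤ × ℤ) :=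
  S.image fun p => (p.1 + v.1, p.2 + v.2)

/-- Single east column doubling at column `d`. -/
def oE (d : ℤ) (T : Finset (ℤ × ℤ)) : Finset (ℤ × ℤ) :=
  (T.filter fun p => p.1 ≤ d) ∪ (T.filter fun p => d ≤ p.1).image fun p => (p.1 + 1, p.2)

/-- The column of `S` at `x`. -/
def colS (S : Finset (ℤ × ℤ)) (x : ℤ) : Finset ℤ := (S.filter fun p => p.1 = x).image Prod.snd

/-- The row of `S` at `y`. -/
def rowS (S : Finset (ℤ × ℤ)) (y : ℤ) : Finset ℤ := (S.filter fun p => p.2 = y).image Prod.fst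

/-- `phiC S x` counts the column changes of `S` in the interval `(xmin S, x]`. -/
noncomputable def phiC (S : Finset (ℤ × ℤ)) (x : ℤ) : ℕ :=
  ((Finset.Icc (xmin S + 1) x).filter fun x' => colS S x' ≠ colS S (x' - 1)).card

/-- `phiR S y` counts the row changes of `S` in the interval `(ymin S, y]`. -/
noncomputable def phiR (S : Finset (ℤ × ℤ)) (y : ℤ) : ℕ :=
  ((Finset.Icc (ymin S + 1) y).filter fun y' => rowS S y' ≠ rowS S (y' - 1)).card

/-- Column compression of a shape. -/
noncomputable def KC (S : Finset (ℤ × ℤ)) : Finset (ℤ × ℤ) := S.image fun p => ((phiC S p.1 : ℤ), p.2)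

/-- Row compression of a shape. -/
noncomputable def KR (S : Finset (ℤ × ℤ)) : Finset (ℤ × ℤ) := S.image fun p => (p.1, (phiR S p.2 : ℤ))

/-- The baseline shape of `S`. -/
noncomputable def Baseline (S : Finset (ℤ × ℤ)) : Finset (ℤ × ℤ) := KR (KC S)

/-- Number of distinct consecutive columns of `S`. -/
noncomputable def mC (S : Finset (ℤ × ℤ)) : ℕ := (S.image Prod.fst).sup (phiC S) + 1

/-- Number of distinct consecutive rows of `S`. -/
noncomputable def mR (S : Finset (ℤ × ℤ)) : ℕ := (S.image Prod.snd).sup (phiR S) + 1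

/-- Consecutive multiplicity of the `i`-th distinct column of `S`. -/
noncomputable def MC (S : Finset (ℤ × ℤ)) (i : ℕ) : ℕ := ((S.image Prod.fst).filter fun x => phiC S x = i).card

/-- Consecutive multiplicity of the `i`-th distinct row of `S`. -/
noncomputable def MR (S : Finset (ℤ × ℤ)) (i : ℕ) : ℕ := ((S.image Prod.snd).filter fun y => phiR S y = i).card

/-- The four unit directions. -/
def dirs : Finset (ℤ × ℤ) := {(1, 0), (-1, 0), (0, 1), (0, -1)}

/-- One node-addition growth step: a direction `d` is fixed and every new node is
generated at a position `p + d` for an existing node `p`. -/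
def AddStep (S T : Finset (ℤ × ℤ)) : Prop :=
  ∃ d ∈ dirs, S ⊆ T ∧ T ⊆ S ∪ S.image (fun p => (p.1 + d.1, p.2 + d.2))

open Finset

def blockStart (a : ℕ → ℕ) (i : ℕ) : ℤ := ∑ j ∈ range i, (a j : ℤ)

noncomputable def block (a : ℕ → ℕ) (i : ℕ) : Finset ℤ :=
  Ico (blockStart a i) (blockStart a (i + 1))

section Blocks

variable (a : ℕ → ℕ)

lemma blockStart_succ (i : ℕ) : blockStart a (i + 1) = blockStart a i + a i :=
  sum_range_succ _ _

lemma blockStart_nonneg (i : ℕ) : 0 ≤ blockStart a i :=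
  sum_nonneg fun _ _ => Nat.cast_nonneg _

lemma blockStart_mono {i j : ℕ} (h : i ≤ j) : blockStart a i ≤ blockStart a j :=
  sum_le_sum_of_subset_of_nonneg (range_subset_range.2 h) fun _ _ _ => Nat.cast_nonneg _

lemma blockStart_add (δ : ℕ → ℕ) (i : ℕ) :
    blockStart (a + δ) i = blockStart a i + blockStart δ i := by
  simp [blockStart, sum_add_distrib]

lemma blockStart_congr {b : ℕ → ℕ} {i : ℕ} (h : ∀ j < i, a j = b j) :
    blockStart a i = blockStart b i :=
  sum_congr rfl fun j hj => by rw [h j (mem_range.1 hj)]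

lemma mem_block {i : ℕ} {x : ℤ} :
    x ∈ block a i ↔ blockStart a i ≤ x ∧ x < blockStart a i + a i := by
  rw [block, mem_Ico, blockStart_succ]

lemma block_disjoint {i j : ℕ} (hij : i ≠ j) : Disjoint (block a i) (block a j) := by
  wlog h : i < j generalizing i j
  · exact (this hij.symm (by omega)).symm
  rw [disjoint_left]
  intro x hxi hxj
  have := blockStart_mono a (show i + 1 ≤ j by omega)
  rw [block, mem_Ico] at hxi hxj
  omega

end Blocks

lemma wD_mono (D : Finset ℤ) {x x' : ℤ} (h : x ≤ x') : wD D x ≤ wD D x' :=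
  card_le_card <| monotone_filter_right D fun _ _ hz => hz.trans_le h

lemma wD_add_one (D : Finset ℤ) (x : ℤ) : wD D (x + 1) = wD D x + if x ∈ D then 1 else 0 := by
  have hsplit : D.filter (· < x + 1) = D.filter (· < x) ∪ D.filter (· = x) := by
    rw [← filter_or]; exact filter_congr fun z _ => by omega
  rw [wD, wD, hsplit, card_union_of_disjoint (disjoint_filter.2 fun _ _ hlt heq => by omega),
    filter_eq']
  split_ifs <;> simp

def stretch (D X : Finset ℤ) : Finset ℤ :=
  X.image (fun x => x + wD D x) ∪ (X.filter (· ∈ D)).image (fun x => x + wD D x + 1)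

lemma stretch_union (D X Y : Finset ℤ) : stretch D (X ∪ Y) = stretch D X ∪ stretch D Y := by
  simp only [stretch, image_union, filter_union]
  ac_rfl

lemma stretch_singleton (D : Finset ℤ) (x : ℤ) :
    stretch D {x} = Ico (x + wD D x) (x + 1 + wD D (x + 1)) := by
  rw [wD_add_one]
  ext z
  by_cases hx : x ∈ D <;> simp [stretch, hx, filter_singleton] <;> omega

lemma stretch_Ico (D : Finset ℤ) {l r : ℤ} (h : l ≤ r) :
    stretch D (Ico l r) = Ico (l + wD D l) (r + wD D r) := by
  induction r, h using Int.leInduction with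
  | base => simp [stretch]
  | succ r hlr ih =>
    have hmono := wD_mono D hlr
    have hstep := wD_mono D (le_add_of_nonneg_right zero_le_one : r ≤ r + 1)
    rw [← Ico_union_Ico_eq_Ico hlr (by omega), Ico_add_one_right_eq_Icc, Icc_self,
      stretch_union, ih, stretch_singleton, Ico_union_Ico_eq_Ico (by omega) (by omega)]

lemma RCE_product (X Y D : Finset ℤ) : RCE (X ×ˢ Y) D = stretch D X ×ˢ Y := by
  ext ⟨x, y⟩
  simp only [RCE, stretch, mem_union, mem_image, mem_filter, mem_product, Prod.exists,
    Prod.mk.injEq]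
  aesop

lemma RCE_biUnion {ι : Type*} (s : Finset ι) (f : ι → Finset (ℤ × ℤ)) (D : Finset ℤ) :
    RCE (s.biUnion f) D = s.biUnion fun i => RCE (f i) D := by
  ext p
  simp only [RCE, mem_union, mem_image, mem_filter, mem_biUnion]
  aesop

noncomputable def doubledCols (a δ : ℕ → ℕ) (m : ℕ) : Finset ℤ :=
  (range m).biUnion fun i => Ico (blockStart a i) (blockStart a i + δ i)

section DoubledCols

variable {a δ : ℕ → ℕ} (hδ : ∀ i, δ i ≤ a i)
include hδ

lemma Ico_subset_block (i : ℕ) : Ico (blockStart a i) (blockStart a i + δ i) ⊆ block a i := by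
  have := hδ i
  rw [block, blockStart_succ]
  exact Ico_subset_Ico_right (by omega)

lemma filter_doubledCols_lt {m i : ℕ} (hi : i ≤ m) :
    (doubledCols a δ m).filter (· < blockStart a i) = doubledCols a δ i := by
  ext x
  simp only [doubledCols, mem_filter, mem_biUnion, mem_range, mem_Ico]
  constructor
  · rintro ⟨⟨j, hjm, hjx, hxj⟩, hxi⟩
    refine ⟨j, ?_, hjx, hxj⟩
    by_contra! hij
    have := blockStart_mono a hij
    omega
  · rintro ⟨j, hji, hjx, hxj⟩
    have h1 := blockStart_mono a (show j + 1 ≤ i by omega)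
    have := blockStart_succ a j
    have := hδ j
    exact ⟨⟨j, by omega, hjx, hxj⟩, by omega⟩

lemma card_doubledCols (m : ℕ) : (#(doubledCols a δ m) : ℤ) = blockStart δ m := by
  rw [doubledCols, card_biUnion]
  · simp [blockStart]
  · exact fun i _ j _ hij =>
      (block_disjoint a hij).mono (Ico_subset_block hδ i) (Ico_subset_block hδ j)

lemma wD_doubledCols {m i : ℕ} (hi : i ≤ m) :
    (wD (doubledCols a δ m) (blockStart a i) : ℤ) = blockStart δ i := by
  rw [wD, filter_doubledCols_lt hδ hi, card_doubledCols hδ]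

lemma stretch_block {m i : ℕ} (hi : i < m) :
    stretch (doubledCols a δ m) (block a i) = block (a + δ) i := by
  rw [block, stretch_Ico _ (blockStart_mono a (Nat.le_succ i)), wD_doubledCols hδ hi.le,
    wD_doubledCols hδ hi, block, blockStart_add, blockStart_add]

end DoubledCols

noncomputable def inflate (B : Finset (ℕ × ℕ)) (a b : ℕ → ℕ) : Finset (ℤ × ℤ) :=
  B.biUnion fun q => block a q.1 ×ˢ block b q.2

lemma mem_inflate {B : Finset (ℕ × ℕ)} {a b : ℕ → ℕ} {p : ℤ × ℤ} :
    p ∈ inflate B a b ↔ ∃ q ∈ B, p.1 ∈ block a q.1 ∧ p.2 ∈ block b q.2 := by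
  simp [inflate]

section Inflate

variable {B : Finset (ℕ × ℕ)} {m : ℕ} {a b δ : ℕ → ℕ}

lemma inflate_congr_left {A : ℕ → ℕ} (hBm : ∀ q ∈ B, q.1 < m) (h : ∀ i < m, a i = A i) :
    inflate B a b = inflate B A b := by
  refine biUnion_congr rfl fun q hq => ?_
  have hq := hBm q hq
  have : block a q.1 = block A q.1 := by
    rw [block, block, blockStart_congr a fun j hj => h j (by omega),
      blockStart_congr a fun j hj => h j (by omega)]
  rw [this]

lemma RCE_inflate (hBm : ∀ q ∈ B, q.1 < m) (hδ : ∀ i, δ i ≤ a i) :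
    RCE (inflate B a b) (doubledCols a δ m) = inflate B (a + δ) b := by
  rw [inflate, RCE_biUnion]
  exact biUnion_congr rfl fun q hq => by rw [RCE_product, stretch_block hδ (hBm q hq)]

lemma eastAdmissible_inflate (hcols : ∀ i < m, ∃ j, (i, j) ∈ B) (hb : ∀ q ∈ B, 0 < b q.2)
    (hδ : ∀ i, δ i ≤ a i) (hne : ∃ i < m, δ i ≠ 0) :
    eastAdmissible (inflate B a b) (doubledCols a δ m) := by
  refine ⟨?_, fun x hx => ?_⟩
  · obtain ⟨i, hi, hδi⟩ := hne
    exact ⟨blockStart a i, mem_biUnion.2 ⟨i, mem_range.2 hi, by simp; omega⟩⟩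
  · obtain ⟨i, hi, hxi⟩ := mem_biUnion.1 hx
    obtain ⟨j, hij⟩ := hcols i (mem_range.1 hi)
    have hbj : 0 < b j := hb _ hij
    exact ⟨blockStart b j, mem_inflate.2 ⟨(i, j), hij, Ico_subset_block hδ i hxi,
      (mem_block b).2 ⟨le_rfl, by dsimp only; omega⟩⟩⟩

end Inflate

inductive RCReach : ℕ → Finset (ℤ × ℤ) → Finset (ℤ × ℤ) → Prop
  | refl (S : Finset (ℤ × ℤ)) : RCReach 0 S S
  | cons {k : ℕ} {S T U : Finset (ℤ × ℤ)} : RCStep S T → RCReach k T U → RCReach (k + 1) S U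

namespace RCReach

variable {k l : ℕ} {S T U : Finset (ℤ × ℤ)}

lemma trans (h : RCReach k S T) (h' : RCReach l T U) : RCReach (k + l) S U := by
  induction h with
  | refl => simpa using h'
  | cons hst _ ih => rw [Nat.add_right_comm]; exact cons hst (ih h')

lemma map {f : Finset (ℤ × ℤ) → Finset (ℤ × ℤ)} (hf : ∀ S T, RCStep S T → RCStep (f S) (f T))
    (h : RCReach k S T) : RCReach k (f S) (f T) := by
  induction h with
  | refl S => exact refl _
  | cons hst _ ih => exact cons (hf _ _ hst) ih

lemma exists_seq (h : RCReach k S U) :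
    ∃ T : ℕ → Finset (ℤ × ℤ), T 0 = S ∧ (∀ i < k, RCStep (T i) (T (i + 1))) ∧ T k = U := by
  induction h with
  | refl S => exact ⟨fun _ => S, rfl, fun i hi => absurd hi (Nat.not_lt_zero i), rfl⟩
  | @cons k S T U hst _ ih =>
    obtain ⟨f, hf0, hf, hfk⟩ := ih
    refine ⟨fun i => Nat.casesOn i S f, rfl, fun i hi => ?_, hfk⟩
    cases i with
    | zero => simpa [hf0] using hst
    | succ i => exact hf i (by omega)

end RCReach

lemma RCStep_inflate_min {B : Finset (ℕ × ℕ)} {m : ℕ} {a A b : ℕ → ℕ}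
    (hcols : B.image Prod.fst = range m) (hb : ∀ q ∈ B, 0 < b q.2)
    (haA : ∀ i < m, a i ≤ A i) (hne : ∃ i < m, 0 < a i ∧ a i ≠ A i) :
    RCStep (inflate B a b) (inflate B (fun i => min (2 * a i) (A i)) b) := by
  obtain ⟨δ, hδ_def⟩ : ∃ δ : ℕ → ℕ, ∀ i, δ i = min (2 * a i) (A i) - a i := ⟨_, fun _ => rfl⟩
  have hδ : ∀ i, δ i ≤ a i := fun i => by rw [hδ_def]; omega
  have hBm : ∀ q ∈ B, q.1 < m := fun q hq => mem_range.1 (hcols ▸ mem_image_of_mem _ hq)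
  have hcols' : ∀ i < m, ∃ j, (i, j) ∈ B := fun i hi => by
    obtain ⟨q, hq, rfl⟩ := mem_image.1 (hcols ▸ mem_range.2 hi : i ∈ B.image Prod.fst)
    exact ⟨q.2, hq⟩
  have hδne : ∃ i < m, δ i ≠ 0 := by
    obtain ⟨i, hi, hai, haAi⟩ := hne
    have := haA i hi
    exact ⟨i, hi, by rw [hδ_def]; omega⟩
  refine ⟨doubledCols a δ m, .inl ⟨eastAdmissible_inflate hcols' hb hδ hδne, ?_⟩⟩
  rw [RCE_inflate hBm hδ]
  refine inflate_congr_left hBm fun i hi => ?_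
  have := haA i hi
  rw [Pi.add_apply, hδ_def]
  omega

lemma exists_RCReach_inflate_east {B : Finset (ℕ × ℕ)} {m : ℕ} {b : ℕ → ℕ}
    (hcols : B.image Prod.fst = range m) (hb : ∀ q ∈ B, 0 < b q.2) (k : ℕ) {a A : ℕ → ℕ}
    (ha : ∀ i < m, 0 < a i) (haA : ∀ i < m, a i ≤ A i) (hAa : ∀ i < m, A i ≤ 2 ^ k * a i) :
    ∃ k' ≤ k, RCReach k' (inflate B a b) (inflate B A b) := by
  have hBm : ∀ q ∈ B, q.1 < m := fun q hq => mem_range.1 (hcols ▸ mem_image_of_mem _ hq)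
  induction k generalizing a with
  | zero =>
    rw [inflate_congr_left hBm fun i hi => ?_]
    · exact ⟨0, le_rfl, .refl _⟩
    have := haA i hi
    have := hAa i hi
    omega
  | succ k ih =>
    by_cases hEq : ∀ i < m, a i = A i
    · exact ⟨0, Nat.zero_le _, by rw [inflate_congr_left hBm hEq]; exact .refl _⟩
    push Not at hEq
    obtain ⟨i, hi, hai⟩ := hEq
    obtain ⟨k', hk', hreach⟩ := ih (a := fun i => min (2 * a i) (A i))
      (fun i hi => by have := ha i hi; have := haA i hi; omega)
      (fun i _ => min_le_right _ _)
      (fun i hi => by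
        have := hAa i hi
        rw [pow_succ, mul_assoc] at this
        rcases min_cases (2 * a i) (A i) with ⟨h, -⟩ | ⟨h, -⟩ <;> rw [h]
        · exact this
        · exact Nat.le_mul_of_pos_left _ (Nat.two_pow_pos k))
    exact ⟨k' + 1, by omega, .cons (RCStep_inflate_min hcols hb haA ⟨i, hi, ha i hi, hai⟩) hreach⟩

def transpose (S : Finset (ℤ × ℤ)) : Finset (ℤ × ℤ) := S.image Prod.swap

section Symmetries

variable {S T : Finset (ℤ × ℤ)} {D : Finset ℤ}

@[simp]
lemma mem_transpose {p : ℤ × ℤ} : p ∈ transpose S ↔ p.swap ∈ S := by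
  rw [transpose, mem_image]
  exact ⟨fun ⟨q, hq, hqp⟩ => hqp ▸ hq, fun h => ⟨p.swap, h, p.swap_swap⟩⟩

@[simp]
lemma transpose_transpose : transpose (transpose S) = S := by
  ext; simp

lemma RCN_eq_transpose : RCN S D = transpose (RCE (transpose S) D) := by
  unfold RCN RCE transpose
  rw [filter_image, image_union, image_image, image_image, image_image, image_image]
  rfl

lemma eastAdmissible_transpose : eastAdmissible (transpose S) D ↔ northAdmissible S D := by
  simp [eastAdmissible, northAdmissible]

lemma northAdmissible_transpose : northAdmissible (transpose S) D ↔ eastAdmissible S D := by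
  simp [eastAdmissible, northAdmissible]

lemma RCStep.transpose (h : RCStep S T) : RCStep (transpose S) (transpose T) := by
  obtain ⟨D, ⟨hD, rfl⟩ | ⟨hD, rfl⟩⟩ := h
  · exact ⟨D, .inr ⟨northAdmissible_transpose.2 hD, by rw [RCN_eq_transpose, transpose_transpose]⟩⟩
  · exact ⟨D, .inl ⟨eastAdmissible_transpose.2 hD, by rw [RCN_eq_transpose, transpose_transpose]⟩⟩

lemma transpose_inflate (B : Finset (ℕ × ℕ)) (a b : ℕ → ℕ) :
    transpose (inflate B a b) = inflate (B.image Prod.swap) b a := by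
  ext
  simp only [mem_transpose, mem_inflate, exists_mem_image, Prod.fst_swap, Prod.snd_swap]
  simp only [and_comm]

@[simp]
lemma mem_translateSh {v p : ℤ × ℤ} : p ∈ translateSh v S ↔ (p.1 - v.1, p.2 - v.2) ∈ S := by
  simp only [translateSh, mem_image]
  constructor
  · rintro ⟨q, hq, rfl⟩
    simpa using hq
  · exact fun h => ⟨_, h, by simp⟩

lemma translateSh_translateSh (u v : ℤ × ℤ) :
    translateSh u (translateSh v S) = translateSh (u + v) S := by
  ext p
  simp [sub_sub, add_comm u.1, add_comm u.2]

lemma transpose_translateSh (v : ℤ × ℤ) :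
    transpose (translateSh v S) = translateSh v.swap (transpose S) := by
  ext p
  simp

lemma wD_image_add (c x : ℤ) : wD (D.image (· + c)) (x + c) = wD D x := by
  rw [wD, wD, filter_image, card_image_of_injective _ (add_left_injective c)]
  simp only [add_lt_add_iff_right]

lemma RCE_translateSh (v : ℤ × ℤ) :
    RCE (translateSh v S) (D.image (· + v.1)) = translateSh v (RCE S D) := by
  have hD : ∀ x, x + v.1 ∈ D.image (· + v.1) ↔ x ∈ D := fun x =>
    (add_left_injective v.1).mem_finset_image
  simp only [RCE, translateSh, filter_image, Function.comp_def, hD, image_union, image_image]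
  congr 1 <;> refine image_congr fun p _ => ?_ <;>
    simp only [wD_image_add, Prod.mk.injEq, and_true] <;> ring

lemma RCN_translateSh (v : ℤ × ℤ) :
    RCN (translateSh v S) (D.image (· + v.2)) = translateSh v (RCN S D) := by
  have h := RCE_translateSh (S := transpose S) (D := D) v.swap
  rw [Prod.fst_swap] at h
  rw [RCN_eq_transpose, transpose_translateSh, h, transpose_translateSh, Prod.swap_swap,
    ← RCN_eq_transpose]

lemma RCStep.translateSh (v : ℤ × ℤ) (h : RCStep S T) :
    RCStep (translateSh v S) (translateSh v T) := by
  obtain ⟨D, ⟨⟨hne, hD⟩, rfl⟩ | ⟨⟨hne, hD⟩, rfl⟩⟩ := h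
  · refine ⟨D.image (· + v.1), .inl ⟨⟨hne.image _, ?_⟩, (RCE_translateSh v).symm⟩⟩
    simp only [mem_image, forall_exists_index, and_imp, forall_apply_eq_imp_iff₂]
    exact fun d hd => let ⟨y, hy⟩ := hD d hd; ⟨y + v.2, by simpa using hy⟩
  · refine ⟨D.image (· + v.2), .inr ⟨⟨hne.image _, ?_⟩, (RCN_translateSh v).symm⟩⟩
    simp only [mem_image, forall_exists_index, and_imp, forall_apply_eq_imp_iff₂]
    exact fun d hd => let ⟨x, hx⟩ := hD d hd; ⟨x + v.1, by simpa using hx⟩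

end Symmetries

lemma exists_RCReach_inflate {B : Finset (ℕ × ℕ)} {m n k : ℕ} {a a' b b' : ℕ → ℕ}
    (hfst : B.image Prod.fst = range m) (hsnd : B.image Prod.snd = range n)
    (ha : ∀ i < m, 0 < a i) (haa' : ∀ i < m, a i ≤ a' i) (ha' : ∀ i < m, a' i ≤ 2 ^ k * a i)
    (hb : ∀ j < n, 0 < b j) (hbb' : ∀ j < n, b j ≤ b' j) (hb' : ∀ j < n, b' j ≤ 2 ^ k * b j) :
    ∃ k' ≤ 2 * k, RCReach k' (inflate B a b) (inflate B a' b') := by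
  have hBm : ∀ q ∈ B, q.1 < m := fun q hq => mem_range.1 (hfst ▸ mem_image_of_mem _ hq)
  have hBn : ∀ q ∈ B, q.2 < n := fun q hq => mem_range.1 (hsnd ▸ mem_image_of_mem _ hq)
  obtain ⟨k₁, hk₁, hreach₁⟩ :=
    exists_RCReach_inflate_east hfst (fun q hq => hb _ (hBn q hq)) k ha haa' ha'
  -- the row phase is the column phase of the transposed shape
  obtain ⟨k₂, hk₂, hreach₂⟩ := exists_RCReach_inflate_east (B := B.image Prod.swap) (b := a')
    (by rw [image_image]; exact hsnd)
    (fun q hq => by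
      obtain ⟨q₀, hq₀, rfl⟩ := mem_image.1 hq
      exact (ha _ (hBm q₀ hq₀)).trans_le (haa' _ (hBm q₀ hq₀)))
    k hb hbb' hb'
  have hreach₂' := hreach₂.map fun _ _ h => h.transpose
  rw [transpose_inflate, transpose_inflate, image_image, Prod.swap_swap_eq, image_id] at hreach₂'
  exact ⟨k₁ + k₂, by omega, hreach₁.trans hreach₂'⟩

lemma eq_Ico_of_forall_le_of_downClosed {A : Finset ℤ} {x₀ : ℤ} (hA : ∀ x ∈ A, x₀ ≤ x)
    (hdown : ∀ x ∈ A, ∀ y, x₀ ≤ y → y ≤ x → y ∈ A) : A = Ico x₀ (x₀ + #A) := by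
  ext x
  rw [mem_Ico]
  constructor
  · intro hx
    have := card_le_card fun y hy => hdown x hx y (mem_Icc.1 hy).1 (mem_Icc.1 hy).2
    rw [Int.card_Icc] at this
    exact ⟨hA x hx, by omega⟩
  · rintro ⟨h₀, hx⟩
    by_contra hxA
    have := card_le_card fun y hy =>
      mem_Ico.2 ⟨hA y hy, lt_of_not_ge fun hxy => hxA (hdown y hy x h₀ hxy)⟩
    rw [Int.card_Ico] at this
    omega

section ChangeCount

variable {β : Type*} [DecidableEq β] (f : ℤ → β) (x₀ : ℤ)

-- by `rfl`, `phiC S = changeCount (colS S) (xmin S)` and `phiR S = changeCount (rowS S) (ymin S)`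
noncomputable def changeCount (x : ℤ) : ℕ :=
  #((Icc (x₀ + 1) x).filter fun x' => f x' ≠ f (x' - 1))

lemma changeCount_mono : Monotone (changeCount f x₀) := fun _ _ h =>
  card_le_card (filter_subset_filter _ (Icc_subset_Icc_right h))

lemma changeCount_self : changeCount f x₀ x₀ = 0 := by
  simp [changeCount]

lemma changeCount_add_one {x : ℤ} (h : x₀ ≤ x) :
    changeCount f x₀ (x + 1) = changeCount f x₀ x + if f (x + 1) = f x then 0 else 1 := by
  rw [changeCount, changeCount, ← insert_Icc_right_eq_Icc_add_one (by omega), filter_insert,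
    add_sub_cancel_right]
  by_cases hfx : f (x + 1) = f x
  · rw [if_neg (not_not.2 hfx), if_pos hfx, add_zero]
  · rw [if_pos hfx, if_neg hfx, card_insert_of_notMem (by simp)]

lemma changeCount_congr {γ : Type*} [DecidableEq γ] {g : ℤ → γ}
    (h : ∀ x y, f x = f y ↔ g x = g y) : changeCount f x₀ = changeCount g x₀ := by
  funext x
  exact congrArg card (filter_congr fun z _ => not_congr (h _ _))

lemma eq_of_changeCount_eq {x x' : ℤ} (hx : x₀ ≤ x) (hx' : x₀ ≤ x')
    (h : changeCount f x₀ x = changeCount f x₀ x') : f x = f x' := by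
  wlog hxx' : x ≤ x' generalizing x x'
  · exact (this hx' hx h.symm (by omega)).symm
  induction x', hxx' using Int.leInduction with
  | base => rfl
  | succ y hxy ih =>
    have h₁ := changeCount_mono f x₀ hxy
    have h₂ := changeCount_mono f x₀ (by omega : y ≤ y + 1)
    have hstep := changeCount_add_one f x₀ (hx.trans hxy)
    rw [ih (by omega) (by omega)]
    split_ifs at hstep with hy
    · exact hy.symm
    · omega

lemma exists_changeCount_eq {x : ℤ} (hx : x₀ ≤ x) {i : ℕ} (hi : i ≤ changeCount f x₀ x) :
    ∃ x', x₀ ≤ x' ∧ x' ≤ x ∧ changeCount f x₀ x' = i := by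
  induction x, hx using Int.leInduction generalizing i with
  | base => exact ⟨x₀, le_rfl, le_rfl, by rw [changeCount_self] at hi ⊢; omega⟩
  | succ y hy ih =>
    have hstep := changeCount_add_one f x₀ hy
    by_cases hiy : i ≤ changeCount f x₀ y
    · obtain ⟨x', h₁, h₂, h₃⟩ := ih hiy
      exact ⟨x', h₁, by omega, h₃⟩
    · exact ⟨y + 1, by omega, le_rfl, by split_ifs at hstep <;> omega⟩

variable {x₀} {X : Finset ℤ} (hX : (X : Set ℤ).OrdConnected) (hx₀ : IsLeast (X : Set ℤ) x₀)
include hX hx₀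

lemma filter_changeCount_lt (i : ℕ) :
    X.filter (changeCount f x₀ · < i) =
      Ico x₀ (x₀ + blockStart (fun j => #(X.filter (changeCount f x₀ · = j))) i) := by
  set A := X.filter (changeCount f x₀ · < i)
  have hA : ∀ x ∈ A, x₀ ≤ x := fun x hx => hx₀.2 (mem_filter.1 hx).1
  have hcard : (#A : ℤ) = blockStart (fun j => #(X.filter (changeCount f x₀ · = j))) i := by
    rw [card_eq_sum_card_fiberwise (f := changeCount f x₀) (t := range i)
      fun x hx => mem_range.2 (mem_filter.1 hx).2, blockStart]
    push_cast
    refine sum_congr rfl fun j hj => ?_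
    rw [filter_filter]
    congr 2
    exact filter_congr fun x _ => by have := mem_range.1 hj; constructor <;> intro h <;> omega
  rw [← hcard]
  refine eq_Ico_of_forall_le_of_downClosed hA fun x hx y h₀ hyx => ?_
  obtain ⟨hxX, hxi⟩ := mem_filter.1 hx
  exact mem_filter.2 ⟨hX.out hx₀.1 hxX ⟨h₀, hyx⟩,
    (changeCount_mono f x₀ hyx).trans_lt hxi⟩

lemma mem_block_iff {x : ℤ} {i : ℕ} :
    x ∈ X ∧ changeCount f x₀ x = i ↔
      x - x₀ ∈ block (fun j => #(X.filter (changeCount f x₀ · = j))) i := by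
  have h₁ := congrArg (fun s : Finset ℤ => x ∈ s) (filter_changeCount_lt f hX hx₀ i)
  have h₂ := congrArg (fun s : Finset ℤ => x ∈ s) (filter_changeCount_lt f hX hx₀ (i + 1))
  simp only [mem_filter, mem_Ico, eq_iff_iff] at h₁ h₂
  have := blockStart_nonneg (fun j => #(X.filter (changeCount f x₀ · = j))) i
  rw [mem_block, ← blockStart_succ]
  constructor
  · rintro ⟨hxX, rfl⟩
    obtain ⟨h₀, hlt⟩ := h₂.1 ⟨hxX, lt_add_one _⟩
    have : ¬x < x₀ + _ := fun h => (h₁.2 ⟨h₀, h⟩).2.false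
    omega
  · intro hx
    obtain ⟨hxX, hlt⟩ := h₂.2 ⟨by omega, by omega⟩
    have : ¬changeCount f x₀ x < i := fun h => by have := (h₁.1 ⟨hxX, h⟩).2; omega
    exact ⟨hxX, by omega⟩

lemma image_changeCount : X.image (changeCount f x₀) = range (X.sup (changeCount f x₀) + 1) := by
  ext i
  rw [mem_image, mem_range]
  constructor
  · rintro ⟨x, hx, rfl⟩
    exact Nat.lt_succ_of_le (le_sup hx)
  · intro hi
    obtain ⟨x, hx, hsup⟩ := exists_mem_eq_sup X ⟨x₀, hx₀.1⟩ (changeCount f x₀)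
    obtain ⟨x', h₀, hx'x, rfl⟩ := exists_changeCount_eq f x₀ (hx₀.2 hx) (i := i) (by omega)
    exact ⟨x', hX.out hx₀.1 hx ⟨h₀, hx'x⟩, rfl⟩

end ChangeCount

section Shapes

variable {S : Finset (ℤ × ℤ)}

lemma mem_colS {x y : ℤ} : y ∈ colS S x ↔ (x, y) ∈ S := by
  simp [colS]

lemma mem_rowS {x y : ℤ} : x ∈ rowS S y ↔ (x, y) ∈ S := by
  simp [rowS]

lemma isLeast_image_fst (hS : S.Nonempty) : IsLeast (S.image Prod.fst : Set ℤ) (xmin S) := by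
  rw [xmin, ← coe_min' (hS.image _), WithTop.untopD_coe]
  exact isLeast_min' _ _

lemma isLeast_image_snd (hS : S.Nonempty) : IsLeast (S.image Prod.snd : Set ℤ) (ymin S) := by
  rw [ymin, ← coe_min' (hS.image _), WithTop.untopD_coe]
  exact isLeast_min' _ _

lemma ShapeConnected.ordConnected_image (hc : ShapeConnected S) {π : ℤ × ℤ → ℤ}
    (hπ : ∀ u v, Adj u v → π v ≤ π u + 1) : (S.image π : Set ℤ).OrdConnected := by
  refine ⟨fun x hx y hy z hz => ?_⟩
  obtain ⟨u, hu, rfl⟩ := mem_image.1 hx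
  obtain ⟨v, hv, rfl⟩ := mem_image.1 hy
  have hpath := hc u hu v hv
  clear hx hy hv
  induction hpath generalizing z with
  | refl => exact mem_image.2 ⟨u, hu, by have := hz.1; have := hz.2; omega⟩
  | @tail w v _ hwv ih =>
    obtain ⟨hw, hv, hadj⟩ := hwv
    rcases le_or_gt z (π w) with h | h
    · exact ih z ⟨hz.1, h⟩
    · have := hπ w v hadj
      exact mem_image.2 ⟨v, hv, by have := hz.2; omega⟩

lemma ShapeConnected.ordConnected_image_fst (hc : ShapeConnected S) :
    (S.image Prod.fst : Set ℤ).OrdConnected :=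
  hc.ordConnected_image fun u v h => by unfold Adj at h; omega

lemma ShapeConnected.ordConnected_image_snd (hc : ShapeConnected S) :
    (S.image Prod.snd : Set ℤ).OrdConnected :=
  hc.ordConnected_image fun u v h => by unfold Adj at h; omega

lemma xmin_le {x y : ℤ} (h : (x, y) ∈ S) : xmin S ≤ x :=
  (isLeast_image_fst ⟨_, h⟩).2 (mem_image_of_mem Prod.fst h)

lemma ymin_le {x y : ℤ} (h : (x, y) ∈ S) : ymin S ≤ y :=
  (isLeast_image_snd ⟨_, h⟩).2 (mem_image_of_mem Prod.snd h)

lemma phiR_eq_changeCount : phiR S = changeCount (rowS S) (ymin S) := rfl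

lemma MC_le_card (i : ℕ) : MC S i ≤ #S :=
  (card_filter_le _ _).trans card_image_le

lemma MR_le_card (i : ℕ) : MR S i ≤ #S :=
  (card_filter_le _ _).trans card_image_le

section Connected

variable (hS : S.Nonempty) (hc : ShapeConnected S)
include hS hc

lemma image_phiC : (S.image Prod.fst).image (phiC S) = range (mC S) :=
  image_changeCount _ hc.ordConnected_image_fst (isLeast_image_fst hS)

lemma image_phiR : (S.image Prod.snd).image (phiR S) = range (mR S) :=
  image_changeCount _ hc.ordConnected_image_snd (isLeast_image_snd hS)

lemma mem_block_MC_iff {x : ℤ} {i : ℕ} :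
    x ∈ S.image Prod.fst ∧ phiC S x = i ↔ x - xmin S ∈ block (MC S) i :=
  mem_block_iff _ hc.ordConnected_image_fst (isLeast_image_fst hS)

lemma mem_block_MR_iff {y : ℤ} {j : ℕ} :
    y ∈ S.image Prod.snd ∧ phiR S y = j ↔ y - ymin S ∈ block (MR S) j :=
  mem_block_iff _ hc.ordConnected_image_snd (isLeast_image_snd hS)

lemma MC_pos {i : ℕ} (hi : i < mC S) : 0 < MC S i := by
  obtain ⟨x, hx, rfl⟩ := mem_image.1 ((image_phiC hS hc).symm ▸ mem_range.2 hi)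
  exact card_pos.2 ⟨x, mem_filter.2 ⟨hx, rfl⟩⟩

lemma MR_pos {j : ℕ} (hj : j < mR S) : 0 < MR S j := by
  obtain ⟨y, hy, rfl⟩ := mem_image.1 ((image_phiR hS hc).symm ▸ mem_range.2 hj)
  exact card_pos.2 ⟨y, mem_filter.2 ⟨hy, rfl⟩⟩

end Connected

end Shapes

noncomputable def natBaseline (S : Finset (ℤ × ℤ)) : Finset (ℕ × ℕ) :=
  S.image fun p => (phiC S p.1, phiR S p.2)

section Baseline

variable {S : Finset (ℤ × ℤ)}

lemma rowS_KC (y : ℤ) : rowS (KC S) y = (rowS S y).image fun x => (phiC S x : ℤ) := by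
  ext
  simp [rowS, KC]

lemma ymin_KC : ymin (KC S) = ymin S := by
  rw [ymin, ymin, KC, image_image]
  rfl

-- columns with equal `phiC` are equal, so compressing columns cannot merge two distinct rows
lemma rowS_KC_eq_iff (y y' : ℤ) : rowS (KC S) y = rowS (KC S) y' ↔ rowS S y = rowS S y' := by
  have key : ∀ y y', rowS (KC S) y = rowS (KC S) y' → rowS S y ⊆ rowS S y' := by
    intro y y' h x hx
    rw [rowS_KC, rowS_KC] at h
    obtain ⟨x', hx', hxx'⟩ := mem_image.1 (h ▸ mem_image_of_mem _ hx)
    have hxS := mem_rowS.1 hx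
    have hx'S := mem_rowS.1 hx'
    have hcol : colS S x' = colS S x := eq_of_changeCount_eq _ _ (xmin_le hx'S) (xmin_le hxS)
      (by exact_mod_cast hxx')
    exact mem_rowS.2 (mem_colS.1 (hcol ▸ mem_colS.2 hx'S))
  exact ⟨fun h => (key y y' h).antisymm (key y' y h.symm), fun h => by rw [rowS_KC, rowS_KC, h]⟩

lemma phiR_KC : phiR (KC S) = phiR S := by
  rw [phiR_eq_changeCount, phiR_eq_changeCount, ymin_KC]
  exact changeCount_congr _ _ rowS_KC_eq_iff

lemma Baseline_eq_image_natBaseline :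
    Baseline S = (natBaseline S).image fun q => ((q.1 : ℤ), (q.2 : ℤ)) := by
  rw [Baseline, KR, phiR_KC, KC, natBaseline, image_image, image_image]
  rfl

lemma natBaseline_eq_of_Baseline_eq {T : Finset (ℤ × ℤ)} (h : Baseline S = Baseline T) :
    natBaseline S = natBaseline T := by
  rw [Baseline_eq_image_natBaseline, Baseline_eq_image_natBaseline] at h
  refine image_injective (fun q q' hqq' => ?_) h
  simp only [Prod.mk.injEq, Nat.cast_inj] at hqq'
  exact Prod.ext hqq'.1 hqq'.2

variable (hS : S.Nonempty) (hc : ShapeConnected S)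
include hS hc

lemma image_fst_natBaseline : (natBaseline S).image Prod.fst = range (mC S) := by
  rw [natBaseline, image_image, ← image_phiC hS hc, image_image]
  rfl

lemma image_snd_natBaseline : (natBaseline S).image Prod.snd = range (mR S) := by
  rw [natBaseline, image_image, ← image_phiR hS hc, image_image]
  rfl

lemma translateSh_inflate_natBaseline :
    translateSh (xmin S, ymin S) (inflate (natBaseline S) (MC S) (MR S)) = S := by
  ext ⟨x, y⟩
  simp only [mem_translateSh, mem_inflate, natBaseline, exists_mem_image,
    ← mem_block_MC_iff hS hc, ← mem_block_MR_iff hS hc]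
  constructor
  · rintro ⟨p, hp, ⟨hx, hpx⟩, ⟨hy, hpy⟩⟩
    have hcol : colS S x = colS S p.1 :=
      eq_of_changeCount_eq _ _ ((isLeast_image_fst hS).2 hx) (xmin_le hp) hpx
    have hrow : rowS S y = rowS S p.2 :=
      eq_of_changeCount_eq _ _ ((isLeast_image_snd hS).2 hy) (ymin_le hp) hpy
    have hxp : (x, p.2) ∈ S := mem_colS.1 (hcol ▸ mem_colS.2 hp)
    exact mem_rowS.1 (hrow ▸ mem_rowS.2 hxp)
  · intro h
    exact ⟨(x, y), h, ⟨mem_image_of_mem _ h, rfl⟩, ⟨mem_image_of_mem _ h, rfl⟩⟩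

end Baseline

theorem RC_log_constructor_general (S_I S_F : Finset (ℤ × ℤ))
    (hI : S_I.Nonempty) (hF : S_F.Nonempty)
    (hcI : ShapeConnected S_I) (hcF : ShapeConnected S_F)
    (hB : Baseline S_I = Baseline S_F)
    (hMC : ∀ i < mC S_I, MC S_I i ≤ MC S_F i)
    (hMR : ∀ i < mR S_I, MR S_I i ≤ MR S_F i) :
    ∃ m ≤ 2 * Nat.clog 2 S_F.card, ∃ T : ℕ → Finset (ℤ × ℤ),
      T 0 = S_I ∧ (∀ i < m, RCStep (T i) (T (i + 1))) ∧
        ∃ v : ℤ × ℤ, T m = translateSh v S_F := by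
  have hK : #S_F ≤ 2 ^ Nat.clog 2 #S_F := Nat.le_pow_clog one_lt_two _
  obtain ⟨m, hm, hreach⟩ := exists_RCReach_inflate (k := Nat.clog 2 #S_F)
    (image_fst_natBaseline hI hcI) (image_snd_natBaseline hI hcI)
    (fun _ => MC_pos hI hcI) hMC
    (fun i hi => (MC_le_card i).trans (hK.trans (Nat.le_mul_of_pos_right _ (MC_pos hI hcI hi))))
    (fun _ => MR_pos hI hcI) hMR
    (fun j hj => (MR_le_card j).trans (hK.trans (Nat.le_mul_of_pos_right _ (MR_pos hI hcI hj))))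
  obtain ⟨T, hT₀, hT, hTm⟩ :=
    (hreach.map fun _ _ h => h.translateSh (xmin S_I, ymin S_I)).exists_seq
  refine ⟨m, hm, T, hT₀.trans (translateSh_inflate_natBaseline hI hcI), hT,
    (xmin S_I, ymin S_I) - (xmin S_F, ymin S_F), ?_⟩
  have hS_F := translateSh_inflate_natBaseline hF hcF
  rw [← natBaseline_eq_of_Baseline_eq hB] at hS_F
  calc T m = translateSh ((xmin S_I, ymin S_I) - (xmin S_F, ymin S_F))
          (translateSh (xmin S_F, ymin S_F) (inflate (natBaseline S_I) (MC S_F) (MR S_F))) := by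
        rw [hTm, translateSh_translateSh, sub_add_cancel]
    _ = _ := by rw [hS_F]

/-- under the multiplicity conditions, `S_F` can be obtained from `S_I`
(up to translation) by at most `2⌈log₂ |S_F|⌉` RC doubling operations. -/
theorem RC_log_constructor (S_I S_F : Finset (ℤ × ℤ))
    (hI : S_I.Nonempty) (hF : S_F.Nonempty)
    (hcI : ShapeConnected S_I) (hcF : ShapeConnected S_F)
    (hB : Baseline S_I = Baseline S_F)
    (hmC : mC S_I = mC S_F) (hmR : mR S_I = mR S_F)
    (hMC : ∀ i < mC S_I, MC S_I i ≤ MC S_F i)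
    (hMR : ∀ i < mR S_I, MR S_I i ≤ MR S_F i) :
    ∃ m ≤ 2 * Nat.clog 2 S_F.card, ∃ T : ℕ → Finset (ℤ × ℤ),
      T 0 = S_I ∧ (∀ i < m, RCStep (T i) (T (i + 1))) ∧
        ∃ v : ℤ × ℤ, T m = translateSh v S_F :=
  RC_log_constructor_general S_I S_F hI hF hcI hcF hB hMC hMR
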